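/- arXiv:1902.04614 — 6 statements merged into one kernel-verified Lean document; each statement's English description precedes it below -/
import Mathlib

section
/- If M ∈ ℝ^{N×N} commutes with an invertible linear transformation Π ∈ ℝ^{N×N}, and S := -(I_N ⊗ C)[(I_N ⊗ A) + M ⊗ (B_v G)]^{-1}(I_N ⊗ B_u) is well-defined (the inverted matrix is invertible), where C is 1×n, A is n×n, B_v is n×q, G is q×n, B_u is n×1, then S commutes with Π. -/
open Matrix Kronecker

theorem stmt0 (N n q : ℕ) (hN : 0 < N) (hn : 0 < n) (hq : 0 < q)
    (A : Matrix (Fin n) (Fin n) ℝ) (Bv : Matrix (Fin n) (Fin q) ℝ)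
    (Bu : Matrix (Fin n) (Fin 1) ℝ) (C : Matrix (Fin 1) (Fin n) ℝ)
    (G : Matrix (Fin q) (Fin n) ℝ) (M Pi : Matrix (Fin N) (Fin N) ℝ)
    (hPi : IsUnit Pi) (hcomm : Pi * M = M * Pi)
    (hinv : IsUnit ((1 : Matrix (Fin N) (Fin N) ℝ) ⊗ₖ A + M ⊗ₖ (Bv * G))) :
    (-(((1 : Matrix (Fin N) (Fin N) ℝ) ⊗ₖ C) *
        ((1 : Matrix (Fin N) (Fin N) ℝ) ⊗ₖ A + M ⊗ₖ (Bv * G))⁻¹ *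
        ((1 : Matrix (Fin N) (Fin N) ℝ) ⊗ₖ Bu))) *
      (Pi ⊗ₖ (1 : Matrix (Fin 1) (Fin 1) ℝ)) =
    (Pi ⊗ₖ (1 : Matrix (Fin 1) (Fin 1) ℝ)) *
      (-(((1 : Matrix (Fin N) (Fin N) ℝ) ⊗ₖ C) *
        ((1 : Matrix (Fin N) (Fin N) ℝ) ⊗ₖ A + M ⊗ₖ (Bv * G))⁻¹ *
        ((1 : Matrix (Fin N) (Fin N) ℝ) ⊗ₖ Bu))) := by
  set L : Matrix (Fin N × Fin n) (Fin N × Fin n) ℝ :=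
    (1 : Matrix (Fin N) (Fin N) ℝ) ⊗ₖ A + M ⊗ₖ (Bv * G) with hL
  set P : Matrix (Fin N × Fin n) (Fin N × Fin n) ℝ :=
    Pi ⊗ₖ (1 : Matrix (Fin n) (Fin n) ℝ) with hP
  have hPL : P * L = L * P := by
    rw [hP, hL, mul_add, add_mul, ← mul_kronecker_mul, ← mul_kronecker_mul,
      ← mul_kronecker_mul, ← mul_kronecker_mul, mul_one, one_mul, mul_one, one_mul,
      mul_one, one_mul, hcomm]
  have hdet : IsUnit L.det := (Matrix.isUnit_iff_isUnit_det L).mp hinv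
  have hPLinv : P * L⁻¹ = L⁻¹ * P := by
    calc P * L⁻¹ = L⁻¹ * L * (P * L⁻¹) := by
          rw [Matrix.nonsing_inv_mul L hdet, Matrix.one_mul]
      _ = L⁻¹ * (L * P * L⁻¹) := by rw [Matrix.mul_assoc L⁻¹, Matrix.mul_assoc L]
      _ = L⁻¹ * (P * (L * L⁻¹)) := by rw [← hPL, Matrix.mul_assoc]
      _ = L⁻¹ * P := by rw [Matrix.mul_nonsing_inv L hdet, Matrix.mul_one]
  have h1 : ((1 : Matrix (Fin N) (Fin N) ℝ) ⊗ₖ Bu) * (Pi ⊗ₖ (1 : Matrix (Fin 1) (Fin 1) ℝ))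
      = P * ((1 : Matrix (Fin N) (Fin N) ℝ) ⊗ₖ Bu) := by
    rw [hP, ← mul_kronecker_mul, ← mul_kronecker_mul, Matrix.mul_one, Matrix.one_mul, Matrix.mul_one, Matrix.one_mul]
  have h2 : ((1 : Matrix (Fin N) (Fin N) ℝ) ⊗ₖ C) * P
      = (Pi ⊗ₖ (1 : Matrix (Fin 1) (Fin 1) ℝ)) * ((1 : Matrix (Fin N) (Fin N) ℝ) ⊗ₖ C) := by
    rw [hP, ← mul_kronecker_mul, ← mul_kronecker_mul, Matrix.mul_one, Matrix.one_mul, Matrix.mul_one, Matrix.one_mul]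
  rw [neg_mul, mul_neg, neg_inj]
  calc ((1 : Matrix (Fin N) (Fin N) ℝ) ⊗ₖ C) * L⁻¹ * ((1 : Matrix (Fin N) (Fin N) ℝ) ⊗ₖ Bu)
        * (Pi ⊗ₖ (1 : Matrix (Fin 1) (Fin 1) ℝ))
      = ((1 : Matrix (Fin N) (Fin N) ℝ) ⊗ₖ C) * (L⁻¹ * P)
        * ((1 : Matrix (Fin N) (Fin N) ℝ) ⊗ₖ Bu) := by
        rw [Matrix.mul_assoc, Matrix.mul_assoc, h1, ← Matrix.mul_assoc, ← Matrix.mul_assoc, Matrix.mul_assoc _ L⁻¹ P]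
    _ = ((1 : Matrix (Fin N) (Fin N) ℝ) ⊗ₖ C) * P * L⁻¹
        * ((1 : Matrix (Fin N) (Fin N) ℝ) ⊗ₖ Bu) := by
        rw [← hPLinv, ← Matrix.mul_assoc]
    _ = Pi ⊗ₖ (1 : Matrix (Fin 1) (Fin 1) ℝ) *
        (((1 : Matrix (Fin N) (Fin N) ℝ) ⊗ₖ C) * L⁻¹ *
          ((1 : Matrix (Fin N) (Fin N) ℝ) ⊗ₖ Bu)) := by
        rw [h2, Matrix.mul_assoc, Matrix.mul_assoc, Matrix.mul_assoc]
end

section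
/- Let P ∈ ℂ^{N×N} be the cyclic permutation matrix and P_F := diag(P^0, P^1, ..., P^{N-1}) ∈ ℂ^{N²×N²} (block-diagonal). For circulant M_0 = Σ_q m_q P^q, one has P_F^{-1}(M_0 ⊗ I_N)P_F = Σ_{q=0}^{N-1} m_q (P^q ⊗ P^{-q}). -/
open Matrix Kronecker
open Fin.NatCast

theorem stmt10 (N : ℕ) [NeZero N] (m : Fin N → ℂ) (M0 P : Matrix (Fin N) (Fin N) ℂ)
    (PF : Matrix (Fin N × Fin N) (Fin N × Fin N) ℂ)
    (hP : ∀ i j : Fin N, P i j = if i = j + 1 then 1 else 0)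
    (hM : ∀ i j : Fin N, M0 i j = m (i - j))
    (hPF : ∀ k i l j : Fin N, PF (k, i) (l, j) = if k = l then (P ^ (k : ℕ)) i j else 0) :
    PF⁻¹ * (M0 ⊗ₖ (1 : Matrix (Fin N) (Fin N) ℂ)) * PF =
      ∑ q : Fin N, m q • ((P ^ (q : ℕ)) ⊗ₖ (P ^ (q : ℕ))⁻¹) := by
  -- entries of P^q
  have hPq : ∀ (q : ℕ) (i j : Fin N), (P ^ q) i j = if i = j + (q : Fin N) then 1 else 0 := by
    intro q
    induction q with
    | zero => intro i j; simp [one_apply]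
    | succ n ih =>
      intro i j
      rw [pow_succ, mul_apply]
      simp only [ih, hP]
      rw [Finset.sum_eq_single (j + 1)]
      · have hc : ((n : ℕ) + 1 : ℕ) = ((n : ℕ) + 1 : ℕ) := rfl
        have : ((n + 1 : ℕ) : Fin N) = (n : Fin N) + 1 := by push_cast; ring
        rw [this]
        have : j + ((n : Fin N) + 1) = j + 1 + (n : Fin N) := by rw [add_comm (n : Fin N) 1, add_assoc]
        rw [this]
        simp
      · intro b _ hb; simp [hb]
      · simp
  have hPN : P ^ N = 1 := by
    ext i j
    rw [hPq]
    simp [Fin.natCast_self, one_apply]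
  have hmod : ∀ n : ℕ, P ^ (n % N) = P ^ n := by
    intro n
    conv_rhs => rw [← Nat.div_add_mod n N]
    rw [pow_add, pow_mul, hPN, one_pow, one_mul]
  have hadd : ∀ x y : Fin N, P ^ (((x + y : Fin N)) : ℕ) = P ^ (x : ℕ) * P ^ (y : ℕ) := by
    intro x y
    rw [Fin.val_add, hmod, pow_add]
  have hright : ∀ q : Fin N, P ^ (q : ℕ) * P ^ (N - (q : ℕ)) = 1 := by
    intro q
    rw [← pow_add, Nat.add_sub_cancel' q.is_lt.le, hPN]
  have hinv_eq : ∀ q : Fin N, (P ^ (q : ℕ))⁻¹ = P ^ (N - (q : ℕ)) := fun q =>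
    inv_eq_right_inv (hright q)
  have hcancel : ∀ q : Fin N, P ^ (q : ℕ) * (P ^ (q : ℕ))⁻¹ = 1 := by
    intro q; rw [hinv_eq]; exact hright q
  -- decomposition of M0
  have hM0 : M0 = ∑ q : Fin N, m q • P ^ (q : ℕ) := by
    ext i j
    rw [hM]
    simp only [Matrix.sum_apply, Matrix.smul_apply, hPq, smul_eq_mul, mul_ite, mul_one, mul_zero]
    have he : ∀ q : Fin N, (i = j + q) ↔ (q = i - j) := by
      intro q; rw [eq_comm (a := q), sub_eq_iff_eq_add']
    simp_rw [he]
    simp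
  -- key block identity
  have key : ∀ q : Fin N,
      ((P ^ (q : ℕ)) ⊗ₖ (1 : Matrix (Fin N) (Fin N) ℂ)) * PF
        = PF * ((P ^ (q : ℕ)) ⊗ₖ (P ^ (q : ℕ))⁻¹) := by
    intro q
    ext ⟨a, b⟩ ⟨l, j⟩
    rw [mul_apply, mul_apply, Fintype.sum_prod_type, Fintype.sum_prod_type]
    simp only [kroneckerMap_apply, hPF, one_apply, mul_ite, mul_one, mul_zero, ite_mul, zero_mul,
      Finset.sum_ite_eq, Finset.sum_ite_eq', Finset.mem_univ, if_true]
    rw [Finset.sum_comm]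
    conv_rhs => rw [Finset.sum_comm]
    simp only [Finset.sum_ite_eq, Finset.sum_ite_eq', Finset.mem_univ, if_true]
    by_cases h : a = l + q
    · have h1 : (P ^ (q : ℕ)) a l = (1 : ℂ) := by rw [hPq]; simp [h]
      rw [h1]
      simp only [one_mul, mul_one]
      rw [← Matrix.mul_apply, h, hadd, mul_assoc, hcancel, mul_one]
    · have h1 : (P ^ (q : ℕ)) a l = (0 : ℂ) := by rw [hPq]; simp [h]
      simp [h1]
  -- right inverse of PF
  set Q : Matrix (Fin N × Fin N) (Fin N × Fin N) ℂ :=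
    Matrix.of fun p p' => if p.1 = p'.1 then (P ^ ((p.1 : Fin N) : ℕ))⁻¹ p.2 p'.2 else 0 with hQ
  have hPFQ : PF * Q = 1 := by
    ext ⟨k, i⟩ ⟨k', i'⟩
    rw [mul_apply, Fintype.sum_prod_type]
    simp only [hQ, Matrix.of_apply, hPF, ite_mul, zero_mul, mul_ite, mul_zero]
    rw [Finset.sum_comm]
    simp only [Finset.sum_ite_eq', Finset.mem_univ, if_true]
    by_cases h : k = k'
    · subst h
      simp only [eq_self_iff_true, if_true]
      rw [← Matrix.mul_apply, hcancel]
      simp [one_apply, Prod.ext_iff]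
    · simp [h, one_apply, Prod.ext_iff]
  have hQPF : Q * PF = 1 := mul_eq_one_comm.mp hPFQ
  have hPFinv : PF⁻¹ = Q := inv_eq_right_inv hPFQ
  have hstep : (M0 ⊗ₖ (1 : Matrix (Fin N) (Fin N) ℂ)) * PF
      = PF * ∑ q : Fin N, m q • ((P ^ (q : ℕ)) ⊗ₖ (P ^ (q : ℕ))⁻¹) := by
    have hk : M0 ⊗ₖ (1 : Matrix (Fin N) (Fin N) ℂ)
        = ∑ q : Fin N, m q • ((P ^ (q : ℕ)) ⊗ₖ (1 : Matrix (Fin N) (Fin N) ℂ)) := by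
      rw [hM0]
      ext ⟨a, b⟩ ⟨c, d⟩
      simp [kroneckerMap_apply, Matrix.sum_apply, Finset.sum_mul, Finset.mul_sum, mul_comm, mul_left_comm, mul_assoc]
    rw [hk, Finset.sum_mul, Finset.mul_sum]
    refine Finset.sum_congr rfl fun q _ => ?_
    rw [smul_mul_assoc, key q, mul_smul_comm]
  calc PF⁻¹ * (M0 ⊗ₖ (1 : Matrix (Fin N) (Fin N) ℂ)) * PF
      = PF⁻¹ * ((M0 ⊗ₖ (1 : Matrix (Fin N) (Fin N) ℂ)) * PF) := by rw [mul_assoc]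
    _ = PF⁻¹ * (PF * ∑ q : Fin N, m q • ((P ^ (q : ℕ)) ⊗ₖ (P ^ (q : ℕ))⁻¹)) := by rw [hstep]
    _ = ∑ q : Fin N, m q • ((P ^ (q : ℕ)) ⊗ₖ (P ^ (q : ℕ))⁻¹) := by
        rw [← mul_assoc, hPFinv, hQPF, one_mul]
end

section
/- For the hexagonal-lattice diffusion interconnection matrix M := (M_0 ⊗ I_{N_0}) + (I_{N_0} ⊗ M_0) + P_F^T(M_0 ⊗ I_{N_0})P_F, where M_0 is the N_0×N_0 circulant second-differences matrix (first row (-2,1,0,...,0,1)) and P_F = diag(P^0, ..., P^{N_0-1}) with P the cyclic shift, the eigenvalues are [Λ]_{mn} = -6 + 2(cos(2πm/N_0) + cos(2πn/N_0) + cos(2π(m-n)/N_0)) for m, n ∈ {0,...,N_0-1}, with eigenvectors w_m ⊗ w_n where (w_k)_j = e^{2πijk/N_0}. -/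
/-!
Each summand of the hexagonal interconnection matrix acts on functions on `Fin N₀ × Fin N₀`
as a second central difference `v (p + d) + v (p - d) - 2 v p`: the two Kronecker terms
along `(1, 0)` and `(0, 1)`, and the conjugated term along `(1, -1)`, because `P_F` acts as
the shear `(k, i) ↦ (k, i - k)`. The vector `w_m ⊗ w_n` is an additive character `ψ` of
`Fin N₀ × Fin N₀`, so its second difference along `d` is
`(ψ d + ψ (-d) - 2) ψ = (2 cos θ_d - 2) ψ`, where `θ_d` is `2πm/N₀`, `2πn/N₀` and
`2π(m - n)/N₀` for the three directions.
-/

open Matrix Kronecker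

open scoped Real Fin.NatCast

section SecondCentralDiff

variable {G R : Type*} [AddGroup G]

def secondCentralDiff [Ring R] (g : G → R) (d p : G) : R :=
  g (p + d) + g (p - d) - 2 * g p

theorem AddChar.secondCentralDiff_eq [CommRing R] (ψ : AddChar G R) (d p : G) :
    secondCentralDiff ψ d p = (ψ d + ψ (-d) - 2) * ψ p := by
  rw [secondCentralDiff, sub_eq_add_neg p d, AddChar.map_add_eq_mul, AddChar.map_add_eq_mul]
  ring

theorem AddChar.apply_add_apply_neg_eq_two_cos (ψ : AddChar G ℂ) {d : G} {θ : ℝ}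
    (h : ψ d = Complex.exp (θ * Complex.I)) : ψ d + ψ (-d) = 2 * Real.cos θ := by
  rw [AddChar.map_neg_eq_inv, h, ← Complex.exp_neg, Complex.ofReal_cos, Complex.two_cos, neg_mul]

end SecondCentralDiff

noncomputable def Fin.expChar (n : ℕ) [NeZero n] (c : ℕ) : AddChar (Fin n) ℂ where
  toFun x := Complex.exp (2 * π * Complex.I * (x : ℕ) * c / n)
  map_zero_eq_one' := by simp
  map_add_eq_mul' x y := by
    have hn : (n : ℂ) ≠ 0 := Nat.cast_ne_zero.mpr (NeZero.ne n)
    rw [← Complex.exp_add, Complex.exp_eq_exp_iff_exists_int, Fin.val_add]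
    obtain ⟨r, q, hr, hrq⟩ :
        ∃ r q : ℕ, ((x : ℕ) + y) % n = r ∧ r + n * q = (x : ℕ) + y :=
      ⟨_, _, rfl, Nat.mod_add_div _ _⟩
    have hrq' : (r : ℂ) + n * q = (x : ℕ) + (y : ℕ) := by exact_mod_cast hrq
    refine ⟨-((q * c : ℕ) : ℤ), ?_⟩
    rw [hr]
    field_simp
    push_cast
    linear_combination (c : ℂ) * hrq'

@[simp]
theorem Fin.expChar_apply (n : ℕ) [NeZero n] (c : ℕ) (x : Fin n) :
    Fin.expChar n c x = Complex.exp (2 * π * Complex.I * (x : ℕ) * c / n) :=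
  rfl

theorem Fin.expChar_one {n : ℕ} [NeZero n] (hn : 2 ≤ n) (c : ℕ) :
    Fin.expChar n c 1 = Complex.exp ((2 * π * c / n : ℝ) * Complex.I) := by
  rw [Fin.expChar_apply, Fin.val_one', Nat.mod_eq_of_lt (by omega)]
  push_cast
  ring_nf

section ProdMk

variable {A B M : Type*} [AddMonoid A] [AddMonoid B] [CommMonoid M]

def AddChar.prodMk (ψ₁ : AddChar A M) (ψ₂ : AddChar B M) : AddChar (A × B) M :=
  ψ₁.compAddMonoidHom (AddMonoidHom.fst A B) * ψ₂.compAddMonoidHom (AddMonoidHom.snd A B)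

@[simp]
theorem AddChar.prodMk_apply (ψ₁ : AddChar A M) (ψ₂ : AddChar B M) (p : A × B) :
    ψ₁.prodMk ψ₂ p = ψ₁ p.1 * ψ₂ p.2 :=
  rfl

end ProdMk

namespace Matrix

section CyclicShift

variable {n : ℕ} [NeZero n] {R : Type*}

def IsCyclicShift [Zero R] [One R] (P : Matrix (Fin n) (Fin n) R) : Prop :=
  ∀ i j, P i j = if i = j + 1 then 1 else 0

variable [Semiring R] {P : Matrix (Fin n) (Fin n) R}

theorem IsCyclicShift.mulVec_apply (hP : P.IsCyclicShift) (v : Fin n → R) (i : Fin n) :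
    (P *ᵥ v) i = v (i - 1) := by
  have h : ∀ j, i = j + 1 ↔ j = i - 1 := fun j => by rw [eq_sub_iff_add_eq, eq_comm]
  simp [mulVec, dotProduct, hP i, h]

theorem IsCyclicShift.vecMul_apply (hP : P.IsCyclicShift) (v : Fin n → R) (j : Fin n) :
    (v ᵥ* P) j = v (j + 1) := by
  simp [vecMul, dotProduct, fun i => hP i j]

theorem IsCyclicShift.pow_mulVec_apply (hP : P.IsCyclicShift) (k : ℕ) (v : Fin n → R)
    (i : Fin n) : (P ^ k *ᵥ v) i = v (i - k) := by
  induction k generalizing v with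
  | zero => simp
  | succ k ih => rw [pow_succ, ← mulVec_mulVec, ih, hP.mulVec_apply, Nat.cast_succ, sub_sub]

theorem IsCyclicShift.vecMul_pow_apply (hP : P.IsCyclicShift) (k : ℕ) (v : Fin n → R)
    (j : Fin n) : (v ᵥ* P ^ k) j = v (j + k) := by
  induction k generalizing v with
  | zero => simp
  | succ k ih => rw [pow_succ', ← vecMul_vecMul, ih, hP.vecMul_apply, Nat.cast_succ, add_assoc]

end CyclicShift

section BlockDiagonal

variable {ι m R : Type*} [Fintype ι] [Fintype m] [DecidableEq ι]
  [NonUnitalNonAssocSemiring R] {A : Matrix (ι × m) (ι × m) R} {B : ι → Matrix m m R}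

theorem mulVec_apply_of_blockDiagonal
    (hA : ∀ k i l j, A (k, i) (l, j) = if k = l then B k i j else 0)
    (v : ι × m → R) (k : ι) (i : m) : (A *ᵥ v) (k, i) = (B k *ᵥ fun j => v (k, j)) i := by
  simp [mulVec, dotProduct, Fintype.sum_prod_type, hA]

theorem vecMul_apply_of_blockDiagonal
    (hA : ∀ k i l j, A (k, i) (l, j) = if k = l then B k i j else 0)
    (v : ι × m → R) (l : ι) (j : m) :
    (v ᵥ* A) (l, j) = ((fun i => v (l, i)) ᵥ* B l) j := by
  simp [vecMul, dotProduct, Fintype.sum_prod_type, hA]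

end BlockDiagonal

theorem kronecker_one_mulVec_apply {ι m R : Type*} [Fintype ι] [Fintype m] [DecidableEq m]
    [NonAssocSemiring R] (A : Matrix ι ι R) (v : ι × m → R) (k : ι) (i : m) :
    ((A ⊗ₖ (1 : Matrix m m R)) *ᵥ v) (k, i) = (A *ᵥ fun l => v (l, i)) k := by
  simp [mulVec, dotProduct, Fintype.sum_prod_type, one_apply]

theorem one_kronecker_mulVec_apply {ι m R : Type*} [Fintype ι] [Fintype m] [DecidableEq ι]
    [NonAssocSemiring R] (A : Matrix m m R) (v : ι × m → R) (k : ι) (i : m) :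
    (((1 : Matrix ι ι R) ⊗ₖ A) *ᵥ v) (k, i) = (A *ᵥ fun j => v (k, j)) i :=
  mulVec_apply_of_blockDiagonal (B := fun _ => A) (fun _ _ _ _ => by simp [one_apply]) v k i

section CirculantLaplacian

variable {n : ℕ} [NeZero n] {R : Type*}

def IsCirculantLaplacian [Ring R] (M : Matrix (Fin n) (Fin n) R) : Prop :=
  ∀ i j, M i j = if i = j then -2 else if j = i + 1 ∨ i = j + 1 then 1 else 0

theorem IsCirculantLaplacian.row_eq [Ring R] {M : Matrix (Fin n) (Fin n) R}
    (hM : M.IsCirculantLaplacian) (hn : 3 ≤ n) (a : Fin n) :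
    M a = Pi.single (a + 1) 1 + Pi.single (a - 1) 1 - (2 : R) • Pi.single a 1 := by
  have h1 : (1 : Fin n) ≠ 0 := by simp [Fin.ext_iff, Nat.mod_eq_of_lt (by omega : 1 < n)]
  have h2 : (1 : Fin n) + 1 ≠ 0 := by
    simp [Fin.ext_iff, Fin.val_add, Nat.mod_eq_of_lt (by omega : 1 < n),
      Nat.mod_eq_of_lt (by omega : 2 < n)]
  have hne₁ : a + 1 ≠ a := by simpa using h1
  have hne₂ : a - 1 ≠ a := by simpa [sub_eq_self] using h1
  have hne₃ : a + 1 ≠ a - 1 := fun h =>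
    h2 (by rwa [eq_sub_iff_add_eq, add_assoc, add_eq_left] at h)
  funext l
  have hl : a = l + 1 ↔ l = a - 1 := by rw [eq_comm, ← eq_sub_iff_add_eq]
  simp only [hM a l, hl]
  by_cases h0 : l = a
  · subst h0; simp [hne₁.symm, hne₂.symm]
  by_cases hp : l = a + 1
  · subst hp; simp [hne₁, hne₁.symm, hne₃]
  by_cases hm : l = a - 1
  · subst hm; simp [hne₂, hne₂.symm, hne₃.symm]
  simp [h0, hp, hm, Ne.symm h0]

theorem IsCirculantLaplacian.mulVec_eq [Ring R] {M : Matrix (Fin n) (Fin n) R}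
    (hM : M.IsCirculantLaplacian) (hn : 3 ≤ n) (g : Fin n → R) :
    M *ᵥ g = secondCentralDiff g 1 := by
  ext a
  rw [mulVec, hM.row_eq hn, sub_dotProduct, add_dotProduct, smul_dotProduct, single_dotProduct,
    single_dotProduct, single_dotProduct, secondCentralDiff]
  simp

variable [CommRing R] {M : Matrix (Fin n) (Fin n) R} (hM : M.IsCirculantLaplacian) (hn : 3 ≤ n)
include hM hn

theorem IsCirculantLaplacian.kronecker_one_mulVec (v : Fin n × Fin n → R) :
    (M ⊗ₖ (1 : Matrix (Fin n) (Fin n) R)) *ᵥ v = secondCentralDiff v (1, 0) := by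
  ext ⟨a, b⟩
  simp [kronecker_one_mulVec_apply, hM.mulVec_eq hn, secondCentralDiff]

theorem IsCirculantLaplacian.one_kronecker_mulVec (v : Fin n × Fin n → R) :
    ((1 : Matrix (Fin n) (Fin n) R) ⊗ₖ M) *ᵥ v = secondCentralDiff v (0, 1) := by
  ext ⟨a, b⟩
  simp [one_kronecker_mulVec_apply, hM.mulVec_eq hn, secondCentralDiff]

theorem IsCirculantLaplacian.shear_conj_mulVec {P : Matrix (Fin n) (Fin n) R}
    {PF : Matrix (Fin n × Fin n) (Fin n × Fin n) R} (hP : P.IsCyclicShift)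
    (hPF : ∀ k i l j, PF (k, i) (l, j) = if k = l then (P ^ (k : ℕ)) i j else 0)
    (v : Fin n × Fin n → R) :
    (PFᵀ * (M ⊗ₖ (1 : Matrix (Fin n) (Fin n) R)) * PF) *ᵥ v =
      secondCentralDiff v (1, -1) := by
  have hPF_mulVec (w : Fin n × Fin n → R) (k i : Fin n) :
      (PF *ᵥ w) (k, i) = w (k, i - k) := by
    rw [mulVec_apply_of_blockDiagonal hPF, hP.pow_mulVec_apply, Fin.cast_val_eq_self]
  have hPFT_mulVec (w : Fin n × Fin n → R) (k i : Fin n) :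
      (PFᵀ *ᵥ w) (k, i) = w (k, i + k) := by
    rw [mulVec_transpose, vecMul_apply_of_blockDiagonal hPF, hP.vecMul_pow_apply,
      Fin.cast_val_eq_self]
  ext ⟨a, b⟩
  rw [← mulVec_mulVec, ← mulVec_mulVec, hPFT_mulVec, hM.kronecker_one_mulVec hn]
  simp only [secondCentralDiff, Prod.mk_add_mk, Prod.mk_sub_mk, hPF_mulVec]
  abel_nf

end CirculantLaplacian

end Matrix

theorem stmt12 (N0 : ℕ) [NeZero N0] (hN : 3 ≤ N0)
    (M0 P : Matrix (Fin N0) (Fin N0) ℂ)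
    (PF : Matrix (Fin N0 × Fin N0) (Fin N0 × Fin N0) ℂ)
    (hM0 : ∀ i j : Fin N0, M0 i j =
      if i = j then -2 else if j = i + 1 ∨ i = j + 1 then 1 else 0)
    (hP : ∀ i j : Fin N0, P i j = if i = j + 1 then 1 else 0)
    (hPF : ∀ k i l j : Fin N0, PF (k, i) (l, j) = if k = l then (P ^ (k : ℕ)) i j else 0)
    (m n : Fin N0) :
    (M0 ⊗ₖ (1 : Matrix (Fin N0) (Fin N0) ℂ) + (1 : Matrix (Fin N0) (Fin N0) ℂ) ⊗ₖ M0 +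
        PFᵀ * (M0 ⊗ₖ (1 : Matrix (Fin N0) (Fin N0) ℂ)) * PF).mulVec
      (fun p : Fin N0 × Fin N0 =>
        Complex.exp (2 * Real.pi * Complex.I * (p.1 : ℕ) * (m : ℕ) / N0) *
        Complex.exp (2 * Real.pi * Complex.I * (p.2 : ℕ) * (n : ℕ) / N0)) =
    (((-6 + 2 * (Real.cos (2 * Real.pi * (m : ℕ) / N0) +
        Real.cos (2 * Real.pi * (n : ℕ) / N0) +
        Real.cos (2 * Real.pi * (((m : ℕ) : ℝ) - ((n : ℕ) : ℝ)) / N0)) : ℝ)) : ℂ) •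
      (fun p : Fin N0 × Fin N0 =>
        Complex.exp (2 * Real.pi * Complex.I * (p.1 : ℕ) * (m : ℕ) / N0) *
        Complex.exp (2 * Real.pi * Complex.I * (p.2 : ℕ) * (n : ℕ) / N0)) := by
  have hM : M0.IsCirculantLaplacian := hM0
  set ψ := (Fin.expChar N0 m).prodMk (Fin.expChar N0 n)
  have hv : (fun p : Fin N0 × Fin N0 =>
      Complex.exp (2 * Real.pi * Complex.I * (p.1 : ℕ) * (m : ℕ) / N0) *
      Complex.exp (2 * Real.pi * Complex.I * (p.2 : ℕ) * (n : ℕ) / N0)) = ψ := rfl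
  have h₁ : ψ (1, 0) = Complex.exp ((2 * π * (m : ℕ) / N0 : ℝ) * Complex.I) := by
    simp [ψ, Fin.expChar_one (by omega : 2 ≤ N0)]
  have h₂ : ψ (0, 1) = Complex.exp ((2 * π * (n : ℕ) / N0 : ℝ) * Complex.I) := by
    simp [ψ, Fin.expChar_one (by omega : 2 ≤ N0)]
  have h₃ : ψ (1, -1) =
      Complex.exp ((2 * π * (((m : ℕ) : ℝ) - ((n : ℕ) : ℝ)) / N0 : ℝ) * Complex.I) := by
    rw [AddChar.prodMk_apply, AddChar.map_neg_eq_inv, Fin.expChar_one (by omega),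
      Fin.expChar_one (by omega), ← Complex.exp_neg, ← Complex.exp_add]
    congr 1
    push_cast
    ring
  rw [hv, add_mulVec, add_mulVec, hM.kronecker_one_mulVec hN, hM.one_kronecker_mulVec hN,
    hM.shear_conj_mulVec hN hP hPF]
  ext p
  simp only [Pi.add_apply, Pi.smul_apply, smul_eq_mul, AddChar.secondCentralDiff_eq,
    ψ.apply_add_apply_neg_eq_two_cos h₁, ψ.apply_add_apply_neg_eq_two_cos h₂,
    ψ.apply_add_apply_neg_eq_two_cos h₃]
  push_cast
  ring
end

section
/- Let M_0 ∈ ℂ^{N_0×N_0} be symmetric circulant with first row coefficients m_q (so m_q = m_{N_0-q}), P the cyclic shift, and P_F = diag(P^0,...,P^{N_0-1}). If N_0 is odd, then P_F^{-1}(M_0 ⊗ I_{N_0})P_F = m_0 I_{N_0²} + Σ_{q=1}^{(N_0-1)/2} m_q (P^q ⊗ P^{-q} + P^{-q} ⊗ P^q). -/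
open Matrix Kronecker Fin.NatCast

theorem stmt14 (N0 : ℕ) [NeZero N0] (hN : 3 ≤ N0) (hodd : Odd N0)
    (c : Fin N0 → ℂ) (M0 P : Matrix (Fin N0) (Fin N0) ℂ)
    (PF : Matrix (Fin N0 × Fin N0) (Fin N0 × Fin N0) ℂ)
    (hM : ∀ i j : Fin N0, M0 i j = c (i - j))
    (hsym : ∀ q : Fin N0, c q = c (-q))
    (hP : ∀ i j : Fin N0, P i j = if i = j + 1 then 1 else 0)
    (hPF : ∀ k i l j : Fin N0, PF (k, i) (l, j) = if k = l then (P ^ (k : ℕ)) i j else 0) :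
    PF⁻¹ * (M0 ⊗ₖ (1 : Matrix (Fin N0) (Fin N0) ℂ)) * PF =
      c 0 • (1 : Matrix (Fin N0 × Fin N0) (Fin N0 × Fin N0) ℂ) +
        ∑ q ∈ Finset.Icc 1 ((N0 - 1) / 2),
          c (q : Fin N0) • ((P ^ q) ⊗ₖ (P ^ q)⁻¹ + (P ^ q)⁻¹ ⊗ₖ (P ^ q)) := by
  have hN0 : 0 < N0 := Nat.pos_of_ne_zero (NeZero.ne N0)
  -- entries of powers of P
  have hpow : ∀ (n : ℕ) (i j : Fin N0), (P ^ n) i j = if i = j + (n : Fin N0) then 1 else 0 := by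
    intro n
    induction n with
    | zero => intro i j; simp [one_apply]
    | succ n ih =>
      intro i j
      rw [pow_succ, mul_apply]
      simp only [ih, hP]
      rw [Finset.sum_eq_single (j + 1)]
      · have h : j + 1 + (n : Fin N0) = j + ((n + 1 : ℕ) : Fin N0) := by push_cast; abel
        simp [h]
      · intro b _ hb; simp [hb]
      · simp
  -- inverses of powers of P
  have hPtP : Pᵀ * P = 1 := by
    ext i j
    rw [mul_apply]
    simp only [transpose_apply, hP]
    rw [Finset.sum_eq_single (j + 1)]
    · simp [one_apply, eq_comm]
    · intro b _ hb; simp [hb]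
    · simp
  have hpinv : ∀ n : ℕ, (P ^ n)⁻¹ = (P ^ n)ᵀ := by
    intro n
    apply inv_eq_left_inv
    induction n with
    | zero => simp
    | succ n ih =>
      rw [pow_succ, transpose_mul, mul_assoc, ← mul_assoc (P ^ n)ᵀ, ih, one_mul, hPtP]
  have hpi : ∀ (n : ℕ) (i j : Fin N0), ((P ^ n)⁻¹) i j = if j = i + (n : Fin N0) then 1 else 0 := by
    intro n i j; rw [hpinv, transpose_apply, hpow]
  -- the inverse of PF
  set Q : Matrix (Fin N0 × Fin N0) (Fin N0 × Fin N0) ℂ :=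
    Matrix.of fun p q => if p.1 = q.1 then ((P ^ ((p.1 : Fin N0) : ℕ))⁻¹) p.2 q.2 else 0 with hQdef
  have hQPF : Q * PF = 1 := by
    ext ⟨k, i⟩ ⟨l, j⟩
    rw [mul_apply, Fintype.sum_prod_type]
    simp only [hQdef, of_apply, hPF, hpi, hpow, Fin.cast_val_eq_self]
    simp only [Finset.sum_ite_eq, Finset.sum_ite_eq', ite_and, mul_ite, ite_mul, mul_one, mul_zero,
      one_apply, Prod.ext_iff, Finset.mem_univ, if_true, zero_mul, Finset.sum_ite_irrel,
      Finset.sum_const_zero]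
    by_cases h : k = l <;> simp [h, add_left_inj, eq_comm]
  have hPFinv : PF⁻¹ = Q := inv_eq_left_inv hQPF
  -- entries of the left-hand side
  have hL : ∀ k i l j : Fin N0,
      (PF⁻¹ * (M0 ⊗ₖ (1 : Matrix (Fin N0) (Fin N0) ℂ)) * PF) (k, i) (l, j)
      = if i + k = j + l then c (k - l) else 0 := by
    intro k i l j
    rw [hPFinv, mul_apply, Fintype.sum_prod_type]
    simp only [mul_apply, Fintype.sum_prod_type, hQdef, of_apply, hPF, hpi, hpow,
      Fin.cast_val_eq_self, kroneckerMap_apply, one_apply, hM]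
    simp [Finset.sum_ite_eq, Finset.sum_ite_eq', ite_and, mul_ite, ite_mul, mul_one, mul_zero,
      Finset.mul_sum, Finset.sum_mul, eq_comm]
  -- entries of the right-hand side
  have hR : ∀ k i l j : Fin N0,
      (c 0 • (1 : Matrix (Fin N0 × Fin N0) (Fin N0 × Fin N0) ℂ) +
        ∑ q ∈ Finset.Icc 1 ((N0 - 1) / 2),
          c (q : Fin N0) • ((P ^ q) ⊗ₖ (P ^ q)⁻¹ + (P ^ q)⁻¹ ⊗ₖ (P ^ q))) (k, i) (l, j)
      = (if k = l ∧ i = j then c 0 else 0) +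
        ∑ q ∈ Finset.Icc 1 ((N0 - 1) / 2),
          c (q : Fin N0) * ((if k = l + (q : Fin N0) then (1:ℂ) else 0) *
              (if j = i + (q : Fin N0) then 1 else 0)
            + (if l = k + (q : Fin N0) then 1 else 0) * (if i = j + (q : Fin N0) then 1 else 0)) := by
    intro k i l j
    simp only [Matrix.add_apply, Matrix.smul_apply, one_apply, smul_eq_mul, Matrix.sum_apply,
      kroneckerMap_apply, hpow, hpi, Prod.mk.injEq, mul_ite, mul_one, mul_zero]
  -- arithmetic helpers
  have hadd : ∀ (x y : Fin N0) (q : ℕ), q < N0 →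
      (x = y + (q : Fin N0) ↔ ((x : ℕ) = y + q ∨ (x : ℕ) + N0 = (y : ℕ) + q)) := by
    intro x y q hq
    have hx := x.is_lt; have hy := y.is_lt
    rw [Fin.ext_iff, Fin.val_add, Fin.val_cast_of_lt hq]
    rcases Nat.lt_or_ge (y.val + q) N0 with h | h
    · rw [Nat.mod_eq_of_lt h]; omega
    · rw [Nat.mod_eq_sub_mod h, Nat.mod_eq_of_lt (by omega)]; omega
  have haddE : ∀ x y z w : Fin N0, x + y = z + w ↔
      ((x : ℕ) + y = (z : ℕ) + w ∨ (x : ℕ) + y = (z : ℕ) + w + N0 ∨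
        (z : ℕ) + w = (x : ℕ) + y + N0) := by
    intro x y z w
    have hx := x.is_lt; have hy := y.is_lt; have hz := z.is_lt; have hw := w.is_lt
    rw [Fin.ext_iff, Fin.val_add, Fin.val_add]
    rcases Nat.lt_or_ge (x.val + y.val) N0 with h1 | h1 <;>
      rcases Nat.lt_or_ge (z.val + w.val) N0 with h2 | h2
    · rw [Nat.mod_eq_of_lt h1, Nat.mod_eq_of_lt h2]; omega
    · rw [Nat.mod_eq_of_lt h1, Nat.mod_eq_sub_mod h2, Nat.mod_eq_of_lt (by omega)]; omega
    · rw [Nat.mod_eq_of_lt h2, Nat.mod_eq_sub_mod h1, Nat.mod_eq_of_lt (by omega)]; omega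
    · rw [Nat.mod_eq_sub_mod h1, Nat.mod_eq_sub_mod h2, Nat.mod_eq_of_lt (by omega),
        Nat.mod_eq_of_lt (by omega)]; omega
  -- the key pointwise identity
  have key : ∀ k i l j : Fin N0,
      (if i + k = j + l then c (k - l) else 0)
      = (if k = l ∧ i = j then c 0 else 0) +
        ∑ q ∈ Finset.Icc 1 ((N0 - 1) / 2),
          c (q : Fin N0) * ((if k = l + (q : Fin N0) then (1:ℂ) else 0) *
              (if j = i + (q : Fin N0) then 1 else 0)
            + (if l = k + (q : Fin N0) then 1 else 0) * (if i = j + (q : Fin N0) then 1 else 0)) := by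
    intro k i l j
    have hk := k.is_lt; have hi := i.is_lt; have hl := l.is_lt; have hj := j.is_lt
    obtain ⟨m, hm⟩ := hodd
    by_cases hij : i + k = j + l
    · have hijv := (haddE i k j l).mp hij
      by_cases hkl : k = l
      · subst hkl
        have hij2 : i = j := by
          have : i + k = j + k := hij
          exact add_right_cancel this
        subst hij2
        rw [if_pos hij, if_pos ⟨rfl, rfl⟩, sub_self, Finset.sum_eq_zero, add_zero]
        intro q hq
        have hq' := Finset.mem_Icc.mp hq
        have h1 : ¬ (k = k + (q : Fin N0)) := by rw [hadd _ _ _ (by omega)]; omega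
        rw [if_neg h1]; ring
      · have hklv : (k : ℕ) ≠ (l : ℕ) := fun h => hkl (Fin.ext h)
        set d : ℕ := if (l : ℕ) ≤ (k : ℕ) then (k : ℕ) - l else (k : ℕ) + N0 - l with hddef
        have hd1 : 1 ≤ d := by rw [hddef]; split <;> omega
        have hdN : d ≤ N0 - 1 := by rw [hddef]; split <;> omega
        have hdv : (k : ℕ) = (l : ℕ) + d ∨ (k : ℕ) + N0 = (l : ℕ) + d := by
          rw [hddef]; split <;> omega
        have hkd : k = l + (d : Fin N0) := (hadd k l d (by omega)).mpr hdv
        have hsub : k - l = (d : Fin N0) := sub_eq_iff_eq_add'.mpr hkd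
        have hji : j = i + (d : Fin N0) := by
          have h2 : j + l = (i + (d : Fin N0)) + l := by rw [← hij, hkd]; abel
          exact add_right_cancel h2
        have hjiv := (hadd j i d (by omega)).mp hji
        rw [if_pos hij, if_neg (fun h => hkl (h.1)), hsub, zero_add]
        by_cases hd2 : d ≤ (N0 - 1) / 2
        · rw [Finset.sum_eq_single d]
          · have h2 : ¬ (l = k + (d : Fin N0)) := by rw [hadd _ _ _ (by omega)]; omega
            have h3 : ¬ (i = j + (d : Fin N0)) := by rw [hadd _ _ _ (by omega)]; omega
            rw [if_pos hkd, if_pos hji, if_neg h2, if_neg h3]; ring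
          · intro q hq hqd
            have hq' := Finset.mem_Icc.mp hq
            have h2 : ¬ (k = l + (q : Fin N0)) := by rw [hadd _ _ _ (by omega)]; omega
            have h3 : ¬ (l = k + (q : Fin N0)) := by rw [hadd _ _ _ (by omega)]; omega
            rw [if_neg h2, if_neg h3]; ring
          · intro hd3; exact absurd (Finset.mem_Icc.mpr ⟨hd1, hd2⟩) hd3
        · set q0 : ℕ := N0 - d with hq0def
          have hq0m : q0 ∈ Finset.Icc 1 ((N0 - 1) / 2) := Finset.mem_Icc.mpr ⟨by omega, by omega⟩
          have hneg : ((q0 : ℕ) : Fin N0) + ((d : ℕ) : Fin N0) = 0 := by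
            rw [← Nat.cast_add]
            have : q0 + d = N0 := by omega
            rw [this, Fin.natCast_self]
          have hcd : c ((d : ℕ) : Fin N0) = c ((q0 : ℕ) : Fin N0) := by
            rw [hsym ((q0 : ℕ) : Fin N0), neg_eq_of_add_eq_zero_right hneg]
          rw [hcd, Finset.sum_eq_single q0]
          · have h2 : l = k + (q0 : Fin N0) := by rw [hadd _ _ _ (by omega)]; omega
            have h3 : i = j + (q0 : Fin N0) := by rw [hadd _ _ _ (by omega)]; omega
            have h4 : ¬ (k = l + (q0 : Fin N0)) := by rw [hadd _ _ _ (by omega)]; omega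
            rw [if_pos h2, if_pos h3, if_neg h4]; ring
          · intro q hq hqd
            have hq' := Finset.mem_Icc.mp hq
            have h2 : ¬ (k = l + (q : Fin N0)) := by rw [hadd _ _ _ (by omega)]; omega
            have h3 : ¬ (l = k + (q : Fin N0)) := by rw [hadd _ _ _ (by omega)]; omega
            rw [if_neg h2, if_neg h3]; ring
          · intro h; exact absurd hq0m h
    · have hijv := (haddE i k j l).not.mp hij
      rw [if_neg hij, if_neg (fun h => hij (by rw [h.1, h.2])), Finset.sum_eq_zero, add_zero]
      intro q hq
      have hq' := Finset.mem_Icc.mp hq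
      by_cases h1 : k = l + (q : Fin N0)
      · have h2 : ¬ (j = i + (q : Fin N0)) := by
          intro h2; exact hij (by rw [h1, h2]; abel)
        by_cases h3 : l = k + (q : Fin N0)
        · have h4 : ¬ (i = j + (q : Fin N0)) := by
            intro h4; exact hij (by rw [h3, h4]; abel)
          rw [if_neg h2, if_neg h4]; ring
        · rw [if_neg h2, if_neg h3]; ring
      · by_cases h3 : l = k + (q : Fin N0)
        · have h4 : ¬ (i = j + (q : Fin N0)) := by
            intro h4; exact hij (by rw [h3, h4]; abel)
          rw [if_neg h1, if_neg h4]; ring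
        · rw [if_neg h1, if_neg h3]; ring
  ext ⟨k, i⟩ ⟨l, j⟩
  rw [hL k i l j, hR k i l j, key k i l j]
end

section
/- For the forward-diagonal interconnection M_F := P_F^{-1}(M_0 ⊗ I_{N_0})P_F with M_0 symmetric circulant (coefficients m_q) and N_0 odd, the eigenvalue corresponding to the (m,n)-th DFT mode w_m ⊗ w_n is m_0 + 2 Σ_{q=1}^{(N_0-1)/2} m_q cos(2πq(n-m)/N_0). -/
/-!
`P_F` is the permutation matrix of the shear `σ (k, i) = (k, i - k)` of `G × G`, `G = ℤ/N₀`.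
Precomposing with `σ` turns the product of characters `ψ ⊗ φ` into `(ψ / φ) ⊗ φ`, on which
`circulant c ⊗ 1` acts by the circulant eigenvalue `∑ q, c q (ψ / φ) (-q)` of the character
`ψ / φ`. For `ψ = w_m`, `φ = w_n`, `N₀` odd and `c` symmetric, the terms `q` and `-q` of this
sum pair up into `2 c_q cos (2π q (n - m) / N₀)`.
-/

open Matrix Kronecker Complex Real

namespace Matrix

variable {G R : Type*} [AddCommGroup G]

lemma kronecker_mulVec_mul [CommSemiring R] {l m n p : Type*} [Fintype m] [Fintype p]
    (A : Matrix l m R) (B : Matrix n p R) (x : m → R) (y : p → R) :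
    (A ⊗ₖ B) *ᵥ (fun q => x q.1 * y q.2) = fun q => (A *ᵥ x) q.1 * (B *ᵥ y) q.2 := by
  ext ⟨k, i⟩
  simp only [mulVec, dotProduct, kroneckerMap_apply, Fintype.sum_prod_type, Finset.sum_mul_sum]
  exact Finset.sum_congr rfl fun _ _ => Finset.sum_congr rfl fun _ _ => by ring

lemma circulant_mulVec_addChar [CommSemiring R] [Fintype G] (c : G → R) (χ : AddChar G R) :
    circulant c *ᵥ χ = (∑ q, c q * χ (-q)) • ⇑χ := by
  ext k
  simp only [mulVec, dotProduct, circulant_apply, Pi.smul_apply, smul_eq_mul, Finset.sum_mul]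
  refine Fintype.sum_equiv (Equiv.subLeft k) _ _ fun l => ?_
  rw [Equiv.subLeft_apply, mul_assoc, ← AddChar.map_add_eq_mul, neg_sub, sub_add_cancel]

lemma inv_permMatrix [CommRing R] {n : Type*} [Fintype n] [DecidableEq n] (σ : Equiv.Perm n) :
    (σ.permMatrix R)⁻¹ = (σ⁻¹).permMatrix R :=
  inv_eq_left_inv (by rw [← permMatrix_mul, mul_inv_cancel, permMatrix_one])

lemma pow_apply_of_apply_eq_ite [Semiring R] [Fintype G] [DecidableEq G] {P : Matrix G G R}
    (g : G) (hP : ∀ i j, P i j = if i = j + g then 1 else 0) (t : ℕ) (i j : G) :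
    (P ^ t) i j = if i = j + t • g then 1 else 0 := by
  induction t generalizing i with
  | zero => simp [one_apply]
  | succ t ih =>
    rw [pow_succ', mul_apply, Finset.sum_eq_single (i - g)]
    · simp only [hP, ih, sub_add_cancel, if_true, one_mul, succ_nsmul', ← add_assoc,
        ← sub_eq_iff_eq_add]
      rw [sub_right_comm]
    · intro l _ hl
      rw [hP, if_neg (fun h => hl (eq_sub_of_add_eq h.symm)), zero_mul]
    · simp

def shear (G : Type*) [AddGroup G] : Equiv.Perm (G × G) :=
  Equiv.prodShear (Equiv.refl G) Equiv.subRight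

@[simp] lemma shear_apply (p : G × G) : shear G p = (p.1, p.2 - p.1) := rfl

@[simp] lemma shear_symm_apply (p : G × G) : (shear G).symm p = (p.1, p.2 + p.1) := rfl

lemma eq_permMatrix_shear [Zero R] [One R] [DecidableEq G] {PF : Matrix (G × G) (G × G) R}
    (hPF : ∀ k i l j, PF (k, i) (l, j) = if k = l then (if i = j + k then 1 else 0) else 0) :
    PF = (shear G).permMatrix R := by
  ext ⟨k, i⟩ ⟨l, j⟩
  simp only [hPF, PEquiv.toMatrix_apply, Equiv.toPEquiv_apply, Option.mem_def,
    Option.some.injEq, shear_apply, Prod.mk.injEq]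
  rcases eq_or_ne k l with rfl | h
  · simp only [if_true, true_and, sub_eq_iff_eq_add]
  · simp [h]

lemma addChar_prod_comp_shear [CommMonoid R] (ψ φ : AddChar G R) :
    (fun p : G × G => ψ p.1 * φ p.2) ∘ shear G = fun p => (ψ / φ) p.1 * φ p.2 := by
  ext ⟨k, i⟩
  simp only [Function.comp_apply, shear_apply, AddChar.div_apply, sub_eq_neg_add,
    AddChar.map_add_eq_mul, mul_assoc]

theorem shear_conj_circulant_kronecker_one_mulVec [CommRing R] [Fintype G] [DecidableEq G]
    (c : G → R) (ψ φ : AddChar G R) :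
    (((shear G).permMatrix R)⁻¹ * (circulant c ⊗ₖ (1 : Matrix G G R)) *
        (shear G).permMatrix R) *ᵥ (fun p => ψ p.1 * φ p.2) =
      (∑ q, c q * ψ (-q) * φ q) • fun p => ψ p.1 * φ p.2 := by
  rw [inv_permMatrix, ← mulVec_mulVec, ← mulVec_mulVec, permMatrix_mulVec (shear G),
    addChar_prod_comp_shear, kronecker_mulVec_mul, circulant_mulVec_addChar, one_mulVec,
    permMatrix_mulVec]
  ext ⟨k, i⟩
  have hφ : φ (-k) * φ (i + k) = φ i := by
    rw [← AddChar.map_add_eq_mul, neg_add_eq_sub, add_sub_cancel_right]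
  simp only [Function.comp_apply, Equiv.Perm.inv_def, shear_symm_apply, Pi.smul_apply,
    smul_eq_mul, AddChar.div_apply, neg_neg, mul_assoc, hφ]

end Matrix

lemma Complex.exp_mul_I_pow_mul_inv_add_eq_two_cos (θ : ℂ) (n m : ℕ) :
    exp (θ * I) ^ n * (exp (θ * I) ^ m)⁻¹ + exp (θ * I) ^ m * (exp (θ * I) ^ n)⁻¹ =
      2 * cos ((n - m) * θ) := by
  rw [two_cos, ← exp_nat_mul, ← exp_nat_mul, ← exp_neg, ← exp_neg, ← exp_add, ← exp_add]
  ring_nf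

namespace Fin

variable {N : ℕ} [NeZero N]

open Fin.NatCast in
lemma ofNat_sub_of_le {q : ℕ} (h : q ≤ N) : Fin.ofNat N (N - q) = -Fin.ofNat N q := by
  refine eq_neg_of_add_eq_zero_left ?_
  rw [ofNat_eq_cast, ofNat_eq_cast, ← Nat.cast_add, Nat.sub_add_cancel h, natCast_self]

open Finset in
lemma sum_univ_eq_add_sum_Icc_add_neg {M : Type*} [AddCommMonoid M] (hN : Odd N)
    (f : Fin N → M) :
    ∑ x, f x = f 0 + ∑ q ∈ Icc 1 ((N - 1) / 2), (f (Fin.ofNat N q) + f (-Fin.ofNat N q)) := by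
  set K := (N - 1) / 2
  have hNK : N = 2 * K + 1 := by obtain ⟨r, hr⟩ := hN; omega
  have hrange : range N = insert 0 (Icc 1 K ∪ Icc (K + 1) (2 * K)) := by
    ext x; simp only [mem_range, mem_insert, mem_union, mem_Icc]; omega
  have hdisj : Disjoint (Icc 1 K) (Icc (K + 1) (2 * K)) :=
    disjoint_left.2 fun q h1 h2 => by simp only [mem_Icc] at h1 h2; omega
  have hreflect : ∑ q ∈ Icc (K + 1) (2 * K), f (Fin.ofNat N q) =
      ∑ q ∈ Icc 1 K, f (-Fin.ofNat N q) := by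
    refine sum_nbij' (fun q => N - q) (fun q => N - q) ?_ ?_ ?_ ?_ fun q hq => ?_ <;>
      simp only [mem_Icc] at * <;> try omega
    rw [ofNat_sub_of_le (by omega), neg_neg]
  calc ∑ x, f x = ∑ q ∈ range N, f (Fin.ofNat N q) := by
        simp only [← sum_univ_eq_sum_range (fun q => f (Fin.ofNat N q)), ofNat_val_eq_self]
    _ = _ := by
      rw [hrange, sum_insert (by simp), sum_union hdisj, hreflect, sum_add_distrib]
      rfl

variable (N) in
noncomputable def stdAddChar : AddChar (Fin N) ℂ :=
  ZMod.stdAddChar.compAddMonoidHom (ZMod.finEquiv N : Fin N →+ ZMod N)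

open Fin.CommRing in
lemma stdAddChar_ofNat (q : ℕ) : stdAddChar N (Fin.ofNat N q) = exp (2 * π * I * q / N) := by
  have h := ZMod.stdAddChar_coe (N := N) q
  rwa [Int.cast_natCast, ← map_natCast (ZMod.finEquiv N) q] at h

lemma stdAddChar_pow_apply (x : Fin N) (k : ℕ) :
    (stdAddChar N ^ k) x = exp (2 * π * I * (x : ℕ) * k / N) := by
  rw [AddChar.pow_apply, ← ofNat_val_eq_self x, stdAddChar_ofNat, ← Complex.exp_nat_mul,
    ofNat_val_eq_self]
  ring_nf

lemma sum_mul_stdAddChar_pow_eq_add_two_mul_sum_cos (hN : Odd N) {c : Fin N → ℂ}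
    (hc : ∀ q, c q = c (-q)) (m n : ℕ) :
    ∑ q, c q * (stdAddChar N ^ m) (-q) * (stdAddChar N ^ n) q =
      c 0 + 2 * ∑ q ∈ Finset.Icc 1 ((N - 1) / 2),
        c (Fin.ofNat N q) * Complex.cos (2 * π * q * ((n : ℝ) - (m : ℝ)) / N) := by
  rw [sum_univ_eq_add_sum_Icc_add_neg hN, Finset.mul_sum]
  simp only [neg_zero, neg_neg, AddChar.pow_apply, AddChar.map_zero_eq_one, mul_one,
    AddChar.map_neg_eq_inv, ← hc, stdAddChar_ofNat]
  congr 1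
  refine Finset.sum_congr rfl fun q _ => ?_
  rw [show exp (2 * π * I * q / N) = exp ((2 * π * q / N) * I) by ring_nf]
  set z := exp ((2 * π * q / N) * I)
  calc _ = c (Fin.ofNat N q) * (z ^ n * (z ^ m)⁻¹ + z ^ m * (z ^ n)⁻¹) := by ring
    _ = _ := by rw [exp_mul_I_pow_mul_inv_add_eq_two_cos]; push_cast; ring_nf

end Fin

theorem stmt15_general (N0 : ℕ) [NeZero N0] (hodd : Odd N0)
    (c : Fin N0 → ℂ) (M0 P : Matrix (Fin N0) (Fin N0) ℂ)
    (PF : Matrix (Fin N0 × Fin N0) (Fin N0 × Fin N0) ℂ)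
    (hM : ∀ i j : Fin N0, M0 i j = c (i - j))
    (hsym : ∀ q : Fin N0, c q = c (-q))
    (hP : ∀ i j : Fin N0, P i j = if i = j + 1 then 1 else 0)
    (hPF : ∀ k i l j : Fin N0, PF (k, i) (l, j) = if k = l then (P ^ (k : ℕ)) i j else 0)
    (m n : Fin N0) :
    (PF⁻¹ * (M0 ⊗ₖ (1 : Matrix (Fin N0) (Fin N0) ℂ)) * PF).mulVec
      (fun p : Fin N0 × Fin N0 =>
        Complex.exp (2 * Real.pi * Complex.I * (p.1 : ℕ) * (m : ℕ) / N0) *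
        Complex.exp (2 * Real.pi * Complex.I * (p.2 : ℕ) * (n : ℕ) / N0)) =
    (c 0 + 2 * ∑ q ∈ Finset.Icc 1 ((N0 - 1) / 2),
        c (Fin.ofNat N0 q) *
          Complex.cos (2 * Real.pi * q * (((n : ℕ) : ℝ) - ((m : ℕ) : ℝ)) / N0)) •
      (fun p : Fin N0 × Fin N0 =>
        Complex.exp (2 * Real.pi * Complex.I * (p.1 : ℕ) * (m : ℕ) / N0) *
        Complex.exp (2 * Real.pi * Complex.I * (p.2 : ℕ) * (n : ℕ) / N0)) := by
  have hM0 : M0 = circulant c := Matrix.ext hM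
  have hPF' : PF = (shear (Fin N0)).permMatrix ℂ := eq_permMatrix_shear fun k i l j => by
    open Fin.CommRing in rw [hPF, pow_apply_of_apply_eq_ite 1 hP, nsmul_one, Fin.cast_val_eq_self]
  simp only [← Fin.stdAddChar_pow_apply]
  rw [hM0, hPF', shear_conj_circulant_kronecker_one_mulVec,
    Fin.sum_mul_stdAddChar_pow_eq_add_two_mul_sum_cos hodd hsym]

theorem stmt15 (N0 : ℕ) [NeZero N0] (hN : 3 ≤ N0) (hodd : Odd N0)
    (c : Fin N0 → ℂ) (M0 P : Matrix (Fin N0) (Fin N0) ℂ)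
    (PF : Matrix (Fin N0 × Fin N0) (Fin N0 × Fin N0) ℂ)
    (hM : ∀ i j : Fin N0, M0 i j = c (i - j))
    (hsym : ∀ q : Fin N0, c q = c (-q))
    (hP : ∀ i j : Fin N0, P i j = if i = j + 1 then 1 else 0)
    (hPF : ∀ k i l j : Fin N0, PF (k, i) (l, j) = if k = l then (P ^ (k : ℕ)) i j else 0)
    (m n : Fin N0) :
    (PF⁻¹ * (M0 ⊗ₖ (1 : Matrix (Fin N0) (Fin N0) ℂ)) * PF).mulVec
      (fun p : Fin N0 × Fin N0 =>
        Complex.exp (2 * Real.pi * Complex.I * (p.1 : ℕ) * (m : ℕ) / N0) *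
        Complex.exp (2 * Real.pi * Complex.I * (p.2 : ℕ) * (n : ℕ) / N0)) =
    (c 0 + 2 * ∑ q ∈ Finset.Icc 1 ((N0 - 1) / 2),
        c (Fin.ofNat N0 q) *
          Complex.cos (2 * Real.pi * q * (((n : ℕ) : ℝ) - ((m : ℕ) : ℝ)) / N0)) •
      (fun p : Fin N0 × Fin N0 =>
        Complex.exp (2 * Real.pi * Complex.I * (p.1 : ℕ) * (m : ℕ) / N0) *
        Complex.exp (2 * Real.pi * Complex.I * (p.2 : ℕ) * (n : ℕ) / N0)) :=
  stmt15_general N0 hodd c M0 P PF hM hsym hP hPF m n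
end

section
/- In the mutual inactivation Notch-Delta model, for any positive parameters γ, k_c, k_t, γ_R and positive steady-state values N*, D*, the 2×2 block A_1 = [[-γ - D*/K, -N*/k_c - λ N*/k_t], [-D*/k_c - λ D*/k_t, -γ - N*/K]] with K := k_c k_t/(k_c + k_t) is Hurwitz for every λ ∈ [-1, 1]; in particular, the zeroth-order coefficient of its characteristic polynomial, γ² + (γ/K)(N* + D*) + (N*D*/(k_c²k_t²))[k_c²(1-λ²) + 2k_c k_t(1-λ)], is nonnegative and the trace is negative. -/
/-!
The eigenvalues of a real 2×2 matrix `A` are the roots of `s² - (tr A) s + det A`, so `A` is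
Hurwitz as soon as `tr A < 0 < det A`. For `A_1` the trace is `-2γ - (N* + D*)/K`, and the
determinant is exactly the displayed zeroth-order coefficient, which is positive: `γ² > 0`, and
`|λ| ≤ 1` makes the coupling term `k_c²(1 - λ²) + 2 k_c k_t (1 - λ)` nonnegative.
-/

open Matrix Polynomial

lemma Matrix.sq_sub_trace_mul_add_det_eq_zero_of_mem_spectrum_map_ofReal
    {A : Matrix (Fin 2) (Fin 2) ℝ} {μ : ℂ} (hμ : μ ∈ spectrum ℂ (A.map (fun x : ℝ => (x : ℂ)))) :
    μ ^ 2 - A.trace * μ + A.det = 0 := by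
  rw [mem_spectrum_iff_isRoot_charpoly, charpoly_fin_two, IsRoot.def] at hμ
  simpa [trace_fin_two, det_fin_two] using hμ

lemma Complex.re_neg_of_sq_sub_mul_add_eq_zero {T Δ : ℝ} (hT : T < 0) (hΔ : 0 < Δ) {μ : ℂ}
    (h : μ ^ 2 - T * μ + Δ = 0) : μ.re < 0 := by
  have hre := congrArg Complex.re h
  have him := congrArg Complex.im h
  simp only [sq, sub_re, add_re, mul_re, ofReal_re, ofReal_im, zero_re, sub_im, add_im, mul_im,
    zero_im] at hre him
  -- Either `μ` is real, and then `μ ≥ 0` would make `μ² - Tμ + Δ` positive, or `Re μ = T / 2`.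
  have him' : μ.im * (2 * μ.re - T) = 0 := by linarith
  rcases mul_eq_zero.mp him' with hreal | hhalf
  · rw [hreal] at hre
    nlinarith [sq_nonneg μ.re]
  · linarith

lemma Matrix.re_neg_of_mem_spectrum_map_ofReal {A : Matrix (Fin 2) (Fin 2) ℝ}
    (htr : A.trace < 0) (hdet : 0 < A.det) {μ : ℂ}
    (hμ : μ ∈ spectrum ℂ (A.map (fun x : ℝ => (x : ℂ)))) : μ.re < 0 :=
  Complex.re_neg_of_sq_sub_mul_add_eq_zero htr hdet
    (sq_sub_trace_mul_add_det_eq_zero_of_mem_spectrum_map_ofReal hμ)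

theorem stmt18_general (γ kc kt Ns Ds lam : ℝ)
    (hγ : 0 < γ) (hkc : 0 < kc) (hkt : 0 < kt)
    (hNs : 0 < Ns) (hDs : 0 < Ds) (hlam : lam ∈ Set.Icc (-1 : ℝ) 1) :
    (∀ μ ∈ spectrum ℂ
        ((!![-γ - Ds / (kc * kt / (kc + kt)), -Ns / kc - lam * Ns / kt;
            -Ds / kc - lam * Ds / kt, -γ - Ns / (kc * kt / (kc + kt))]).map
          (fun x : ℝ => (x : ℂ))),
      μ.re < 0) ∧
    0 ≤ γ ^ 2 + (γ / (kc * kt / (kc + kt))) * (Ns + Ds) +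
        (Ns * Ds / (kc ^ 2 * kt ^ 2)) *
          (kc ^ 2 * (1 - lam ^ 2) + 2 * kc * kt * (1 - lam)) ∧
    Matrix.trace
        !![-γ - Ds / (kc * kt / (kc + kt)), -Ns / kc - lam * Ns / kt;
          -Ds / kc - lam * Ds / kt, -γ - Ns / (kc * kt / (kc + kt))] < 0 := by
  obtain ⟨hlam₁, hlam₂⟩ := hlam
  set K := kc * kt / (kc + kt) with hK
  have hK_pos : 0 < K := by positivity
  set A : Matrix (Fin 2) (Fin 2) ℝ :=
    !![-γ - Ds / K, -Ns / kc - lam * Ns / kt; -Ds / kc - lam * Ds / kt, -γ - Ns / K]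
  have htr : A.trace < 0 := by
    rw [trace_fin_two]
    simp only [A, of_apply, cons_val', cons_val_zero, cons_val_one, empty_val', cons_val_fin_one]
    have : 0 < Ds / K + Ns / K := by positivity
    linarith
  have hdet : A.det = γ ^ 2 + (γ / K) * (Ns + Ds) +
      (Ns * Ds / (kc ^ 2 * kt ^ 2)) * (kc ^ 2 * (1 - lam ^ 2) + 2 * kc * kt * (1 - lam)) := by
    rw [det_fin_two]
    simp only [A, hK, of_apply, cons_val', cons_val_zero, cons_val_one, empty_val', cons_val_fin_one]
    field_simp
    ring
  have hdet_pos : 0 < A.det := by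
    have h₁ : 0 ≤ 1 - lam ^ 2 := by nlinarith
    have h₂ : 0 ≤ 1 - lam := by linarith
    rw [hdet]
    positivity
  exact ⟨fun μ hμ => re_neg_of_mem_spectrum_map_ofReal htr hdet_pos hμ, hdet ▸ hdet_pos.le, htr⟩

theorem stmt18 (γ γR kc kt Ns Ds lam : ℝ)
    (hγ : 0 < γ) (hγR : 0 < γR) (hkc : 0 < kc) (hkt : 0 < kt)
    (hNs : 0 < Ns) (hDs : 0 < Ds) (hlam : lam ∈ Set.Icc (-1 : ℝ) 1) :
    (∀ μ ∈ spectrum ℂ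
        ((!![-γ - Ds / (kc * kt / (kc + kt)), -Ns / kc - lam * Ns / kt;
            -Ds / kc - lam * Ds / kt, -γ - Ns / (kc * kt / (kc + kt))]).map
          (fun x : ℝ => (x : ℂ))),
      μ.re < 0) ∧
    0 ≤ γ ^ 2 + (γ / (kc * kt / (kc + kt))) * (Ns + Ds) +
        (Ns * Ds / (kc ^ 2 * kt ^ 2)) *
          (kc ^ 2 * (1 - lam ^ 2) + 2 * kc * kt * (1 - lam)) ∧
    Matrix.trace
        !![-γ - Ds / (kc * kt / (kc + kt)), -Ns / kc - lam * Ns / kt;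
          -Ds / kc - lam * Ds / kt, -γ - Ns / (kc * kt / (kc + kt))] < 0 :=
  stmt18_general γ kc kt Ns Ds lam hγ hkc hkt hNs hDs hlam
end
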